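/- arXiv:1711.07708 — 2 statements merged into one kernel-verified Lean document; each statement's English description precedes it below -/
import Mathlib

section
/- Let W : Ω → M_q(ℂ) be a measurable function with values in the positive semidefinite q×q matrices, integrable with respect to a measure λ. For measurable ℂ^q-valued functions f with ∫ ‖W^{1/2} f‖² dλ < ∞ and h with h(ω) ∈ range(W(ω)) for all ω and ∫ h* W^† h dλ < ∞ (where W^† denotes the pointwise Moore–Penrose inverse), one has ∫ |h* f| dλ ≤ (∫ ‖W^{1/2} f‖² dλ)^{1/2} · (∫ h* W^† h dλ)^{1/2}. -/
open MeasureTheory Set Matrix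
open scoped ComplexOrder

/-- `B` is the Moore–Penrose inverse of `A` (the four Penrose conditions). -/
def IsMoorePenroseInverse {q : ℕ} (A B : Matrix (Fin q) (Fin q) ℂ) : Prop :=
  A * B * A = A ∧ B * A * B = B ∧ (A * B)ᴴ = A * B ∧ (B * A)ᴴ = B * A

/-!
Write `h = W x`. Since `W` is Hermitian and `W W^† W = W`, one has `h* f = x* W f` and
`h* W^† h = x* W x`, so Cauchy–Schwarz for the semi-inner product `⟨x, y⟩ = x* W y` gives the
pointwise bound `|h* f|² ≤ (f* W f) (h* W^† h)`. Integrating it with the Cauchy–Schwarz inequality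
for lower Lebesgue integrals gives the theorem.
-/

open scoped ENNReal

namespace Matrix

variable {n 𝕜 : Type*} [Fintype n] [RCLike 𝕜]

theorem PosSemidef.norm_star_dotProduct_mulVec_sq_le
    {M : Matrix n n 𝕜} (hM : M.PosSemidef) (x y : n → 𝕜) :
    ‖star x ⬝ᵥ M *ᵥ y‖ ^ 2 ≤ RCLike.re (star x ⬝ᵥ M *ᵥ x) * RCLike.re (star y ⬝ᵥ M *ᵥ y) := by
  let _ := M.toSeminormedAddCommGroup hM
  let _ := M.toInnerProductSpace hM
  have h := inner_mul_inner_self_le (𝕜 := 𝕜) x y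
  rw [norm_inner_symm y x, ← sq] at h
  rw [dotProduct_comm (star x), dotProduct_comm (star x), dotProduct_comm (star y)]
  exact h

theorem PosSemidef.norm_star_dotProduct_sq_le_of_mem_range {W W' : Matrix n n 𝕜}
    (hW : W.PosSemidef) (hWW' : W * W' * W = W) {g : n → 𝕜} (hg : g ∈ Set.range W.mulVec)
    (f : n → 𝕜) :
    ‖star g ⬝ᵥ f‖ ^ 2 ≤ RCLike.re (star f ⬝ᵥ W *ᵥ f) * RCLike.re (star g ⬝ᵥ W' *ᵥ g) := by
  obtain ⟨x, rfl⟩ := hg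
  have hstar : star (W *ᵥ x) = star x ᵥ* W := by rw [star_mulVec, hW.isHermitian.eq]
  have hgf : star (W *ᵥ x) ⬝ᵥ f = star x ⬝ᵥ W *ᵥ f := by rw [hstar, dotProduct_mulVec]
  have hgg : star (W *ᵥ x) ⬝ᵥ W' *ᵥ (W *ᵥ x) = star x ⬝ᵥ W *ᵥ x := by
    rw [hstar, ← dotProduct_mulVec, mulVec_mulVec, mulVec_mulVec, hWW']
  rw [hgf, hgg, mul_comm]
  exact hW.norm_star_dotProduct_mulVec_sq_le x f

end Matrix

namespace ENNReal

theorem le_rpow_half_mul_rpow_half_of_sq_le {a b c : ℝ≥0∞} (h : c ^ 2 ≤ a * b) :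
    c ≤ a ^ (1 / 2 : ℝ) * b ^ (1 / 2 : ℝ) := by
  rw [← mul_rpow_of_nonneg _ _ (by norm_num)]
  calc c = (c ^ 2) ^ (1 / 2 : ℝ) := by
        rw [← rpow_natCast, ← rpow_mul]; norm_num
    _ ≤ (a * b) ^ (1 / 2 : ℝ) := rpow_le_rpow h (by norm_num)

end ENNReal

theorem MeasureTheory.lintegral_le_rpow_half_mul_rpow_half_of_sq_le {α : Type*}
    [MeasurableSpace α] {μ : Measure α} {a b c : α → ℝ≥0∞} (ha : AEMeasurable a μ)
    (ha_top : ∀ x, a x ≠ ∞)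
    (h : ∀ x, c x ^ 2 ≤ a x * b x) :
    ∫⁻ x, c x ∂μ ≤ (∫⁻ x, a x ∂μ) ^ (1 / 2 : ℝ) * (∫⁻ x, b x ∂μ) ^ (1 / 2 : ℝ) := by
  obtain ⟨c', hc'_meas, hc'c, hc'_eq⟩ := exists_measurable_le_lintegral_eq μ c
  set F : α → ℝ≥0∞ := fun x => a x ^ (1 / 2 : ℝ)
  have hc' : ∀ x, c' x ≤ F x * b x ^ (1 / 2 : ℝ) := fun x =>
    ENNReal.le_rpow_half_mul_rpow_half_of_sq_le ((pow_le_pow_left' (hc'c x) 2).trans (h x))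
  -- a measurable substitute for the possibly non-measurable `√b`
  set G : α → ℝ≥0∞ := fun x => c' x / F x
  have hF_top : ∀ x, F x ≠ ∞ := fun x => ENNReal.rpow_ne_top_of_nonneg (by norm_num) (ha_top x)
  have hc'FG : ∀ x, c' x ≤ F x * G x := by
    intro x
    by_cases hF0 : F x = 0
    · simpa [hF0] using hc' x
    · rw [ENNReal.mul_div_cancel hF0 (hF_top x)]
  have hGb : ∀ x, G x ≤ b x ^ (1 / 2 : ℝ) := fun x =>
    ENNReal.div_le_of_le_mul (by rw [mul_comm]; exact hc' x)
  have hF_sq : ∀ x, F x ^ (2 : ℝ) = a x := fun x => by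
    rw [← ENNReal.rpow_mul]; norm_num
  have hF : AEMeasurable F μ := ha.pow_const _
  calc ∫⁻ x, c x ∂μ = ∫⁻ x, c' x ∂μ := hc'_eq
    _ ≤ ∫⁻ x, (F * G) x ∂μ := lintegral_mono hc'FG
    _ ≤ (∫⁻ x, F x ^ (2 : ℝ) ∂μ) ^ (1 / 2 : ℝ) * (∫⁻ x, G x ^ (2 : ℝ) ∂μ) ^ (1 / 2 : ℝ) :=
        ENNReal.lintegral_mul_le_Lp_mul_Lq μ Real.HolderConjugate.two_two hF
          (hc'_meas.aemeasurable.div hF)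
    _ ≤ (∫⁻ x, a x ∂μ) ^ (1 / 2 : ℝ) * (∫⁻ x, b x ∂μ) ^ (1 / 2 : ℝ) := by
        simp only [hF_sq]
        gcongr with x
        calc G x ^ (2 : ℝ) ≤ (b x ^ (1 / 2 : ℝ)) ^ (2 : ℝ) := by gcongr; exact hGb x
          _ = b x := by rw [← ENNReal.rpow_mul]; norm_num

theorem stmt9_general {Ω : Type*} [MeasurableSpace Ω] (lam : Measure Ω) (q : ℕ)
    (W Wdag : Ω → Matrix (Fin q) (Fin q) ℂ)
    (hWmeas : ∀ j k, Measurable (fun ω => W ω j k))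
    (hWpsd : ∀ ω, (W ω).PosSemidef)
    (hdag : ∀ ω, IsMoorePenroseInverse (W ω) (Wdag ω))
    (f h : Ω → Fin q → ℂ) (hf : Measurable f)
    (hhran : ∀ ω, h ω ∈ Set.range (W ω).mulVec) :
    ∫⁻ ω, ENNReal.ofReal ‖star (h ω) ⬝ᵥ f ω‖ ∂lam ≤
      (∫⁻ ω, ENNReal.ofReal ((star (f ω) ⬝ᵥ (W ω).mulVec (f ω)).re) ∂lam) ^ (1/2 : ℝ) *
        (∫⁻ ω, ENNReal.ofReal ((star (h ω) ⬝ᵥ (Wdag ω).mulVec (h ω)).re) ∂lam) ^ (1/2 : ℝ) := by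
  have hWf : Measurable fun ω => star (f ω) ⬝ᵥ W ω *ᵥ f ω := by
    simp only [dotProduct, mulVec]
    fun_prop
  refine lintegral_le_rpow_half_mul_rpow_half_of_sq_le
    (Complex.measurable_re.comp hWf).ennreal_ofReal.aemeasurable
    (fun _ => ENNReal.ofReal_ne_top) fun ω => ?_
  have hfWf : 0 ≤ (star (f ω) ⬝ᵥ W ω *ᵥ f ω).re := (hWpsd ω).re_dotProduct_nonneg _
  rw [← ENNReal.ofReal_pow (norm_nonneg _), ← ENNReal.ofReal_mul hfWf]
  exact ENNReal.ofReal_le_ofReal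
    ((hWpsd ω).norm_star_dotProduct_sq_le_of_mem_range (hdag ω).1 (hhran ω) (f ω))

/-- Matrix Cauchy–Schwarz inequality in `L²(W dλ)`:
`∫ |h* f| dλ ≤ (∫ ‖W^{1/2} f‖² dλ)^{1/2} (∫ h* W^† h dλ)^{1/2}`.
Here `‖W^{1/2} f‖² = f* W f` (real and nonnegative since `W` is positive semidefinite),
and similarly `h* W^† h` is real and nonnegative. -/
theorem stmt9 {Ω : Type*} [MeasurableSpace Ω] (lam : Measure Ω) (q : ℕ)
    (W Wdag : Ω → Matrix (Fin q) (Fin q) ℂ)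
    (hWmeas : ∀ j k, Measurable (fun ω => W ω j k))
    (hWpsd : ∀ ω, (W ω).PosSemidef)
    (hWint : ∀ j k, Integrable (fun ω => W ω j k) lam)
    (hdag : ∀ ω, IsMoorePenroseInverse (W ω) (Wdag ω))
    (f h : Ω → Fin q → ℂ) (hf : Measurable f) (hh : Measurable h)
    (hhran : ∀ ω, h ω ∈ Set.range (W ω).mulVec)
    (hfint : ∫⁻ ω, ENNReal.ofReal ((star (f ω) ⬝ᵥ (W ω).mulVec (f ω)).re) ∂lam < ⊤)
    (hhint : ∫⁻ ω, ENNReal.ofReal ((star (h ω) ⬝ᵥ (Wdag ω).mulVec (h ω)).re) ∂lam < ⊤) :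
    ∫⁻ ω, ENNReal.ofReal ‖star (h ω) ⬝ᵥ f ω‖ ∂lam ≤
      (∫⁻ ω, ENNReal.ofReal ((star (f ω) ⬝ᵥ (W ω).mulVec (f ω)).re) ∂lam) ^ (1/2 : ℝ) *
        (∫⁻ ω, ENNReal.ofReal ((star (h ω) ⬝ᵥ (Wdag ω).mulVec (h ω)).re) ∂lam) ^ (1/2 : ℝ) :=
  stmt9_general lam q W Wdag hWmeas hWpsd hdag f h hf hhran
end

section
/- Let X be a Banach space with bounded linear projections P₁, P₂ with P₁ + P₂ = I onto closed complementary subspaces X₁, X₂, and assume moreover ‖x‖ ≤ ‖P₁x‖ + ‖P₂x‖ and ‖Pᵢx‖ ≤ ‖x‖ for all x (as holds in L^α direct sum decompositions by indicator functions). Let L be a linear subspace of X whose closure contains X₂. Then for every f ∈ X, inf{‖f − g‖ : g ∈ L} = inf{‖P₁(f − g)‖ : g ∈ L}. -/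
open Set

theorem stmt12 {X : Type*} [NormedAddCommGroup X] [NormedSpace ℝ X] [CompleteSpace X]
    (P₂ : X →L[ℝ] X) (hproj : ∀ x, P₂ (P₂ x) = P₂ x)
    (hn1 : ∀ x : X, ‖x‖ ≤ ‖x - P₂ x‖ + ‖P₂ x‖)
    (hn2 : ∀ x : X, ‖x - P₂ x‖ ≤ ‖x‖)
    (hn3 : ∀ x : X, ‖P₂ x‖ ≤ ‖x‖)
    (L : Submodule ℝ X) (hL : Set.range P₂ ⊆ closure (L : Set X))
    (f : X) :
    (⨅ g : L, ‖f - (g : X)‖) = ⨅ g : L, ‖(f - (g : X)) - P₂ (f - (g : X))‖ := by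
  have hbdd : ∀ F : L → ℝ, (∀ g, 0 ≤ F g) → BddBelow (Set.range F) := by
    intro F h
    exact ⟨0, by rintro _ ⟨g, rfl⟩; exact h g⟩
  apply le_antisymm
  · apply le_ciInf
    intro g
    refine le_of_forall_pos_le_add ?_
    intro ε hε
    obtain ⟨h, hhL, hh⟩ :=
      Metric.mem_closure_iff.mp (hL ⟨f - g, rfl⟩) ε hε
    have hmem : (g : X) + h ∈ L := L.add_mem g.2 hhL
    calc (⨅ g' : L, ‖f - (g' : X)‖) ≤ ‖f - ((g : X) + h)‖ :=
          ciInf_le (hbdd _ fun _ => norm_nonneg _) (⟨(g : X) + h, hmem⟩ : L)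
      _ = ‖((f - g) - P₂ (f - g)) + (P₂ (f - g) - h)‖ := by congr 1; abel
      _ ≤ ‖(f - g) - P₂ (f - g)‖ + ‖P₂ (f - g) - h‖ := norm_add_le _ _
      _ ≤ ‖(f - g) - P₂ (f - g)‖ + ε := by
          have : ‖P₂ (f - g) - h‖ ≤ ε := by
            rw [← dist_eq_norm]; exact le_of_lt hh
          linarith
  · apply le_ciInf
    intro g
    exact (ciInf_le (hbdd _ fun _ => norm_nonneg _) g).trans (hn2 _)
end
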